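/- arXiv:0710.5785 — 2 statements merged into one kernel-verified Lean document; each statement's English description precedes it below -/
import Mathlib

section
/- Let $X$ be a compact space, $d$ a continuous pseudometric on $X$, $\delta > 0$, and $C_1, \dots, C_n$ closed subsets of $X$ each of $d$-diameter at most $\delta$, with $\bigcup_{i=1}^n C_i = X$. Let $D_i = \{x \in X : d(x, C_i) \geq \delta\}$. If for homeomorphisms $g, h$ of $X$ there exists $x \in X$ with $d(g(x), h(x)) > 2\delta$, then there exists an index $i$ with $hg^{-1}(C_i) \cap D_i \neq \emptyset$. -/
/-- let `d` be a continuous pseudometric on a compact Hausdorff `X`, `δ > 0`,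
and `C₁, …, Cₙ` closed sets of `d`-diameter `≤ δ` covering `X`; let
`Dᵢ = {x | d(x, Cᵢ) ≥ δ}`. If `g, h` are homeomorphisms of `X` and there is `x` with
`d(g x, h x) > 2δ`, then for some `i` the set `h g⁻¹ (Cᵢ)` meets `Dᵢ`. -/
theorem graph_translate_meets {X : Type*} [TopologicalSpace X] [CompactSpace X] [T2Space X]
    (d : X → X → ℝ) (hd0 : ∀ x, d x x = 0) (hdsymm : ∀ x y, d x y = d y x)
    (hdtri : ∀ x y z, d x z ≤ d x y + d y z)
    (hdcont : Continuous (fun p : X × X => d p.1 p.2))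
    (δ : ℝ) (hδ : 0 < δ) (n : ℕ) (C : Fin n → Set X) (hCclosed : ∀ i, IsClosed (C i))
    (hdiam : ∀ i, ∀ x ∈ C i, ∀ y ∈ C i, d x y ≤ δ)
    (hcover : (⋃ i, C i) = Set.univ)
    (D : Fin n → Set X) (hD : ∀ i, D i = {x : X | ∀ c ∈ C i, δ ≤ d x c})
    (g h : X ≃ₜ X) (x : X) (hx : 2 * δ < d (g x) (h x)) :
    ∃ i, (((fun y => h (g.symm y)) '' C i) ∩ D i).Nonempty := by
  obtain ⟨i, hi⟩ : ∃ i, g x ∈ C i := by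
    have : g x ∈ ⋃ i, C i := hcover ▸ Set.mem_univ _
    simpa using this
  refine ⟨i, h x, ⟨g x, hi, by simp⟩, ?_⟩
  rw [hD]
  intro c hc
  have h1 : d (g x) c ≤ δ := hdiam i _ hi _ hc
  have h2 : d (g x) (h x) ≤ d (g x) c + d c (h x) := hdtri _ _ _
  have := hdsymm c (h x)
  linarith
end

section
/- The topological group $\mathrm{Aut}(\mathbb{Q}, \leq)$ of all order-automorphisms of the rationals, with the topology of pointwise convergence (inherited from $\mathbb{Q}_d^{\mathbb{Q}}$ where $\mathbb{Q}_d$ is discrete), is isomorphic as a topological group to the group of all order-preserving self-homeomorphisms of the Cantor middle-third set $K \subseteq [0,1]$, with the compact-open topology. -/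
/-- The group of order-preserving self-homeomorphisms of the middle-third Cantor set. -/
def OPH : Type := {h : ↥cantorSet ≃ₜ ↥cantorSet // StrictMono h}

instance : Group OPH where
  mul a b := ⟨b.1.trans a.1, a.2.comp b.2⟩
  one := ⟨Homeomorph.refl _, strictMono_id⟩
  inv a := ⟨a.1.symm, fun x y hxy => a.2.lt_iff_lt.mp
    (by simpa only [Homeomorph.apply_symm_apply] using hxy)⟩
  mul_assoc a b c := Subtype.ext (Homeomorph.ext fun x => rfl)
  one_mul a := Subtype.ext (Homeomorph.ext fun x => rfl)
  mul_one a := Subtype.ext (Homeomorph.ext fun x => rfl)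
  inv_mul_cancel a := Subtype.ext (Homeomorph.ext fun x => a.1.symm_apply_apply x)

/-- The topology of pointwise convergence on `Aut(ℚ, ≤)`, inherited from `ℚ_d ^ ℚ`
with `ℚ_d` discrete. -/
def autQTop : TopologicalSpace (ℚ ≃o ℚ) :=
  TopologicalSpace.induced (fun f => (⇑f : ℚ → ℚ))
    (@Pi.topologicalSpace ℚ (fun _ => ℚ) (fun _ => ⊥))

/-- The compact-open topology on the order-preserving self-homeomorphisms of the
Cantor set. -/
def OPHTop : TopologicalSpace OPH :=
  TopologicalSpace.induced
    (fun h : OPH => (⟨⇑h.1, h.1.continuous⟩ : C(↥cantorSet, ↥cantorSet)))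
    ContinuousMap.compactOpen

open Set

namespace CP

lemma one_mem_cantorSet : (1:ℝ) ∈ cantorSet := by
  refine Set.mem_iInter.mpr fun n => ?_
  induction n with
  | zero => simp [preCantorSet]
  | succ n ih => exact Or.inr ⟨1, ih, by norm_num⟩

lemma preCantorSet_subset_unitInterval {n : ℕ} : preCantorSet n ⊆ Set.Icc 0 1 := by
  induction n with
  | zero => simp [preCantorSet]
  | succ n ih =>
    rintro x (⟨y, hy, rfl⟩ | ⟨y, hy, rfl⟩) <;>
      · obtain ⟨h0, h1⟩ := ih hy
        constructor <;> [positivity; nlinarith]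

lemma mem_div3 {x : ℝ} (hx : x ∈ cantorSet) : x / 3 ∈ cantorSet := by
  refine Set.mem_iInter.mpr fun n => ?_
  match n with
  | 0 =>
    obtain ⟨h0, h1⟩ := cantorSet_subset_unitInterval hx
    exact ⟨by linarith, by linarith⟩
  | n + 1 => exact Or.inl ⟨x, Set.mem_iInter.mp hx n, rfl⟩

lemma mem_add_two_div3 {x : ℝ} (hx : x ∈ cantorSet) : (2 + x) / 3 ∈ cantorSet := by
  refine Set.mem_iInter.mpr fun n => ?_
  match n with
  | 0 =>
    obtain ⟨h0, h1⟩ := cantorSet_subset_unitInterval hx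
    exact ⟨by linarith, by linarith⟩
  | n + 1 => exact Or.inr ⟨x, Set.mem_iInter.mp hx n, rfl⟩

lemma middle_cases {x : ℝ} (hx : x ∈ cantorSet) : x ≤ 1/3 ∨ 2/3 ≤ x := by
  have h1 := Set.mem_iInter.mp hx 1
  rcases h1 with ⟨y, hy, rfl⟩ | ⟨y, hy, rfl⟩
  · obtain ⟨h0, h1⟩ := preCantorSet_subset_unitInterval hy
    left; linarith
  · obtain ⟨h0, h1⟩ := preCantorSet_subset_unitInterval hy
    right; linarith

lemma mem_scale_left {x : ℝ} (hx : x ∈ cantorSet) (h : x ≤ 1/3) : 3 * x ∈ cantorSet := by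
  refine Set.mem_iInter.mpr fun n => ?_
  have h1 := Set.mem_iInter.mp hx (n + 1)
  rcases h1 with ⟨y, hy, hxy⟩ | ⟨y, hy, hxy⟩
  · have : 3 * x = y := by field_simp at hxy; linarith
    exact this ▸ hy
  · obtain ⟨h0, h1⟩ := preCantorSet_subset_unitInterval hy
    exfalso
    have : x = (2 + y) / 3 := hxy.symm
    rw [this] at h; linarith

lemma mem_scale_right {x : ℝ} (hx : x ∈ cantorSet) (h : 2/3 ≤ x) : 3 * x - 2 ∈ cantorSet := by
  refine Set.mem_iInter.mpr fun n => ?_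
  have h1 := Set.mem_iInter.mp hx (n + 1)
  rcases h1 with ⟨y, hy, hxy⟩ | ⟨y, hy, hxy⟩
  · obtain ⟨h0, h1⟩ := preCantorSet_subset_unitInterval hy
    exfalso
    have : x = y / 3 := hxy.symm
    rw [this] at h; linarith
  · have : 3 * x - 2 = y := by field_simp at hxy; linarith
    exact this ▸ hy

lemma not_mem_middle {x : ℝ} (hx : x ∈ cantorSet) : x ∉ Set.Ioo (1/3 : ℝ) (2/3) := by
  rcases middle_cases hx with h | h <;> rintro ⟨h1, h2⟩ <;> linarith

/-- No isolated points. -/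
lemma exists_near {x : ℝ} (hx : x ∈ cantorSet) (n : ℕ) :
    ∃ y ∈ cantorSet, y ≠ x ∧ |y - x| ≤ (1/3) ^ n := by
  induction n generalizing x with
  | zero =>
    obtain ⟨h0, h1⟩ := cantorSet_subset_unitInterval hx
    rcases eq_or_ne x 0 with rfl | hne
    · exact ⟨1, one_mem_cantorSet, by norm_num, by norm_num⟩
    · exact ⟨0, zero_mem_cantorSet, fun h => hne h.symm, by rw [abs_of_nonpos (by linarith)]; simp; linarith⟩
  | succ n ih =>
    rcases middle_cases hx with h | h
    · obtain ⟨y, hy, hne, hd⟩ := ih (mem_scale_left hx h)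
      refine ⟨y / 3, mem_div3 hy, fun hc => hne ?_, ?_⟩
      · have : y = 3 * x := by linarith [hc]
        simpa using this
      · have : |y / 3 - x| = |y - 3 * x| / 3 := by
          have : y / 3 - x = (y - 3 * x) / 3 := by ring
          rw [this, abs_div, abs_of_nonneg (by norm_num : (0:ℝ) ≤ 3)]
        rw [this]
        rw [pow_succ]
        calc |y - 3*x| / 3 ≤ (1/3)^n / 3 := by linarith
        _ = (1/3)^n * (1/3) := by ring
    · obtain ⟨y, hy, hne, hd⟩ := ih (mem_scale_right hx h)
      refine ⟨(2 + y) / 3, mem_add_two_div3 hy, fun hc => hne ?_, ?_⟩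
      · have : y = 3 * x - 2 := by linarith [hc]
        simpa using this
      · have : |(2 + y) / 3 - x| = |y - (3 * x - 2)| / 3 := by
          have : (2 + y) / 3 - x = (y - (3 * x - 2)) / 3 := by ring
          rw [this, abs_div, abs_of_nonneg (by norm_num : (0:ℝ) ≤ 3)]
        rw [this, pow_succ]
        calc |y - (3*x-2)| / 3 ≤ (1/3)^n / 3 := by linarith
        _ = (1/3)^n * (1/3) := by ring

end CP

namespace CP

structure IsGap (a b : ℝ) : Prop where
  mem_a : a ∈ cantorSet
  mem_b : b ∈ cantorSet
  lt : a < b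
  not_mem : ∀ t ∈ cantorSet, t ∉ Set.Ioo a b

def Gap : Type := {p : ℝ × ℝ // IsGap p.1 p.2}

namespace Gap

def a (p : Gap) : ℝ := p.1.1
def b (p : Gap) : ℝ := p.1.2
lemma mem_a (p : Gap) : p.a ∈ cantorSet := p.2.mem_a
lemma mem_b (p : Gap) : p.b ∈ cantorSet := p.2.mem_b
lemma lt (p : Gap) : p.a < p.b := p.2.lt
lemma not_mem (p : Gap) : ∀ t ∈ cantorSet, t ∉ Set.Ioo p.a p.b := p.2.not_mem

lemma a_nonneg (p : Gap) : 0 ≤ p.a := (cantorSet_subset_unitInterval p.mem_a).1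
lemma b_le_one (p : Gap) : p.b ≤ 1 := (cantorSet_subset_unitInterval p.mem_b).2
lemma b_nonneg (p : Gap) : 0 ≤ p.b := (cantorSet_subset_unitInterval p.mem_b).1
lemma a_le_one (p : Gap) : p.a ≤ 1 := (cantorSet_subset_unitInterval p.mem_a).2

/-- The second endpoint is determined by the first. -/
lemma ext_a {p q : Gap} (h : p.a = q.a) : p = q := by
  have hb : p.b = q.b := by
    rcases lt_trichotomy p.b q.b with hlt | he | hlt
    · exact absurd ⟨h ▸ p.lt, hlt⟩ (q.not_mem p.b p.mem_b)
    · exact he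
    · exact absurd ⟨h.symm ▸ q.lt, hlt⟩ (p.not_mem q.b q.mem_b)
  exact Subtype.ext (Prod.ext h hb)

lemma ext_b {p q : Gap} (h : p.b = q.b) : p = q := by
  have ha : p.a = q.a := by
    rcases lt_trichotomy p.a q.a with hlt | he | hlt
    · exact absurd ⟨hlt, h ▸ q.lt⟩ (p.not_mem q.a q.mem_a)
    · exact he
    · exact absurd ⟨hlt, h.symm ▸ p.lt⟩ (q.not_mem p.a p.mem_a)
  exact Subtype.ext (Prod.ext ha h)

lemma a_injective : Function.Injective (Gap.a) := fun _ _ h => ext_a h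

noncomputable instance : LinearOrder Gap := LinearOrder.lift' Gap.a a_injective

lemma le_iff {p q : Gap} : p ≤ q ↔ p.a ≤ q.a := Iff.rfl
lemma lt_iff {p q : Gap} : p < q ↔ p.a < q.a := lt_iff_lt_of_le_iff_le' le_iff le_iff

/-- If `p < q` then the gaps are disjoint: `p.b ≤ q.a`. -/
lemma b_le_a_of_lt {p q : Gap} (h : p < q) : p.b ≤ q.a := by
  by_contra hc
  push_neg at hc
  exact p.not_mem q.a q.mem_a ⟨lt_iff.mp h, hc⟩

/-- Overlapping gaps are equal. -/
lemma eq_of_overlap {p q : Gap} (h1 : p.a < q.b) (h2 : q.a < p.b) : p = q := by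
  rcases lt_trichotomy p q with h | h | h
  · exact absurd (b_le_a_of_lt h) (not_le.mpr h2)
  · exact h
  · exact absurd (b_le_a_of_lt h) (not_le.mpr h1)

end Gap
end CP

namespace CP
namespace Gap

noncomputable def middle : Gap :=
  ⟨(1/3, 2/3), by
    constructor
    · simpa using mem_div3 one_mem_cantorSet
    · simpa using mem_add_two_div3 zero_mem_cantorSet
    · norm_num
    · exact fun t ht hm => not_mem_middle ht hm⟩

@[simp] lemma middle_a : middle.a = 1/3 := rfl
@[simp] lemma middle_b : middle.b = 2/3 := rfl

noncomputable def scaleDown (q : Gap) : Gap :=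
  ⟨(q.a/3, q.b/3), by
    constructor
    · exact mem_div3 q.mem_a
    · exact mem_div3 q.mem_b
    · linarith [q.lt]
    · rintro t ht ⟨h1, h2⟩
      have hle : t ≤ 1/3 := by linarith [q.b_le_one]
      exact q.not_mem (3*t) (mem_scale_left ht hle) ⟨by linarith, by linarith⟩⟩

@[simp] lemma scaleDown_a (q : Gap) : (scaleDown q).a = q.a / 3 := rfl
@[simp] lemma scaleDown_b (q : Gap) : (scaleDown q).b = q.b / 3 := rfl

noncomputable def scaleRight (q : Gap) : Gap :=
  ⟨((2 + q.a)/3, (2 + q.b)/3), by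
    constructor
    · exact mem_add_two_div3 q.mem_a
    · exact mem_add_two_div3 q.mem_b
    · linarith [q.lt]
    · rintro t ht ⟨h1, h2⟩
      have hge : 2/3 ≤ t := by linarith [q.a_nonneg]
      exact q.not_mem (3*t - 2) (mem_scale_right ht hge) ⟨by linarith, by linarith⟩⟩

@[simp] lemma scaleRight_a (q : Gap) : (scaleRight q).a = (2 + q.a) / 3 := rfl
@[simp] lemma scaleRight_b (q : Gap) : (scaleRight q).b = (2 + q.b) / 3 := rfl

/-- Quantitative gap existence: any two Cantor set points at distance `≥ 3⁻ⁿ` have a gap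
of length `≥ 3⁻⁽ⁿ⁺¹⁾` between them. -/
lemma exists_bigGap (n : ℕ) : ∀ a b : ℝ, a ∈ cantorSet → b ∈ cantorSet →
    (1/3:ℝ)^n ≤ b - a → ∃ p : Gap, a ≤ p.a ∧ p.b ≤ b ∧ (1/3:ℝ)^(n+1) ≤ p.b - p.a := by
  induction n with
  | zero =>
    intro a b ha hb h
    obtain ⟨ha0, ha1⟩ := cantorSet_subset_unitInterval ha
    obtain ⟨hb0, hb1⟩ := cantorSet_subset_unitInterval hb
    refine ⟨middle, ?_, ?_, ?_⟩ <;> simp <;> norm_num at h ⊢ <;> linarith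
  | succ n ih =>
    intro a b ha hb h
    have hp : (0:ℝ) < (1/3:ℝ)^(n+1) := by positivity
    have hab : a < b := by linarith
    rcases middle_cases hb with hbm | hbm
    · -- b ≤ 1/3, hence a < 1/3 too
      obtain ⟨p, h1, h2, h3⟩ := ih (3*a) (3*b) (mem_scale_left ha (by linarith))
        (mem_scale_left hb hbm) (by rw [pow_succ] at h; linarith)
      exact ⟨scaleDown p, by simp; linarith, by simp; linarith,
        by simp [pow_succ] at h3 ⊢; linarith⟩
    · rcases middle_cases ha with ham | ham
      · -- a ≤ 1/3 ≤ 2/3 ≤ b : use the middle gap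
        refine ⟨middle, by simpa using ham, by simpa using hbm, ?_⟩
        simp only [middle_a, middle_b]
        calc (1/3:ℝ)^(n+2) ≤ (1/3:ℝ)^1 := by
              apply pow_le_pow_of_le_one <;> norm_num
        _ = 2/3 - 1/3 := by norm_num
      · -- 2/3 ≤ a
        obtain ⟨p, h1, h2, h3⟩ := ih (3*a - 2) (3*b - 2) (mem_scale_right ha ham)
          (mem_scale_right hb hbm) (by rw [pow_succ] at h; linarith)
        exact ⟨scaleRight p, by simp; linarith, by simp; linarith,
          by simp [pow_succ] at h3 ⊢; linarith⟩

/-- Qualitative gap existence. -/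
lemma exists_gap_between {a b : ℝ} (ha : a ∈ cantorSet) (hb : b ∈ cantorSet) (h : a < b) :
    ∃ p : Gap, a ≤ p.a ∧ p.b ≤ b := by
  obtain ⟨n, hn⟩ := exists_pow_lt_of_lt_one (sub_pos.mpr h) (by norm_num : (1/3:ℝ) < 1)
  obtain ⟨p, h1, h2, _⟩ := exists_bigGap n a b ha hb hn.le
  exact ⟨p, h1, h2⟩

end Gap
end CP

namespace CP
namespace Gap

def extSet (g : Gap → Gap) (x : ℝ) : Set ℝ :=
  insert 0 ((fun p => (g p).b) '' {p : Gap | p.b ≤ x})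

lemma mem_extSet {g : Gap → Gap} {x t : ℝ} :
    t ∈ extSet g x ↔ t = 0 ∨ ∃ p : Gap, p.b ≤ x ∧ (g p).b = t := by
  constructor
  · rintro (rfl | ⟨p, hp, rfl⟩)
    exacts [Or.inl rfl, Or.inr ⟨p, hp, rfl⟩]
  · rintro (rfl | ⟨p, hp, rfl⟩)
    exacts [Set.mem_insert _ _, Set.mem_insert_of_mem _ ⟨p, hp, rfl⟩]

noncomputable def ext (g : Gap → Gap) (x : ℝ) : ℝ := sSup (extSet g x)

lemma extSet_nonempty (g : Gap → Gap) (x : ℝ) : (extSet g x).Nonempty :=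
  ⟨0, Set.mem_insert _ _⟩

lemma extSet_subset (g : Gap → Gap) (x : ℝ) : extSet g x ⊆ cantorSet := by
  rintro t ht
  rcases mem_extSet.mp ht with rfl | ⟨p, _, rfl⟩
  · exact zero_mem_cantorSet
  · exact (g p).mem_b

lemma extSet_bddAbove (g : Gap → Gap) (x : ℝ) : BddAbove (extSet g x) :=
  ⟨1, fun t ht => (cantorSet_subset_unitInterval (extSet_subset g x ht)).2⟩

lemma ext_mem (g : Gap → Gap) (x : ℝ) : ext g x ∈ cantorSet := by
  have h1 : ext g x ∈ closure (extSet g x) :=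
    csSup_mem_closure (extSet_nonempty g x) (extSet_bddAbove g x)
  have h2 : closure (extSet g x) ⊆ cantorSet := by
    rw [← isClosed_cantorSet.closure_eq]
    exact closure_mono (extSet_subset g x)
  exact h2 h1

lemma ext_mono (g : Gap → Gap) {x y : ℝ} (h : x ≤ y) : ext g x ≤ ext g y := by
  apply csSup_le_csSup (extSet_bddAbove g y) (extSet_nonempty g x)
  rintro t ht
  rcases mem_extSet.mp ht with rfl | ⟨p, hp, rfl⟩
  · exact Set.mem_insert _ _
  · exact mem_extSet.mpr (Or.inr ⟨p, hp.trans h, rfl⟩)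

/-- Every Cantor set point is the sup of `0` and the right gap endpoints below it. -/
lemma ext_id {x : ℝ} (hx : x ∈ cantorSet) : ext id x = x := by
  apply le_antisymm
  · apply csSup_le (extSet_nonempty _ x)
    rintro t ht
    rcases mem_extSet.mp ht with rfl | ⟨p, hp, rfl⟩
    · exact (cantorSet_subset_unitInterval hx).1
    · exact hp
  · by_contra hc
    push_neg at hc
    obtain ⟨p, h1, h2⟩ := exists_gap_between (ext_mem id x) hx hc
    have : p.b ≤ ext id x := le_csSup (extSet_bddAbove id x) (mem_extSet.mpr (Or.inr ⟨p, h2, rfl⟩))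
    linarith [p.lt]

lemma lt_of_b_le_a {q p : Gap} (h : q.b ≤ p.a) : q < p := lt_iff.mpr (lt_of_lt_of_le q.lt h)

lemma eq_or_b_le_a {q p : Gap} (h : q.b ≤ p.b) : q = p ∨ q.b ≤ p.a := by
  rcases eq_or_ne q p with rfl | hne
  · exact Or.inl rfl
  · right
    have hlt : q.b < p.b := lt_of_le_of_ne h (fun he => hne (ext_b he))
    by_contra hc
    push_neg at hc
    exact p.not_mem q.b q.mem_b ⟨hc, hlt⟩

lemma ext_apply_b (g : Gap ≃o Gap) (p : Gap) : ext ⇑g p.b = (g p).b := by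
  apply le_antisymm
  · apply csSup_le (extSet_nonempty _ _)
    rintro t ht
    rcases mem_extSet.mp ht with rfl | ⟨q, hq, rfl⟩
    · exact (g p).b_nonneg
    · rcases eq_or_b_le_a hq with rfl | hq2
      · exact le_refl _
      · have : g q < g p := g.strictMono (lt_of_b_le_a hq2)
        linarith [b_le_a_of_lt this, (g p).lt]
  · exact le_csSup (extSet_bddAbove _ _) (mem_extSet.mpr (Or.inr ⟨p, le_refl _, rfl⟩))

lemma ext_apply_a (g : Gap ≃o Gap) (p : Gap) : ext ⇑g p.a = (g p).a := by
  apply le_antisymm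
  · apply csSup_le (extSet_nonempty _ _)
    rintro t ht
    rcases mem_extSet.mp ht with rfl | ⟨q, hq, rfl⟩
    · exact (g p).a_nonneg
    · exact b_le_a_of_lt (g.strictMono (lt_of_b_le_a hq))
  · calc (g p).a = ext id (g p).a := (ext_id (g p).mem_a).symm
    _ ≤ ext ⇑g p.a := by
        apply csSup_le_csSup (extSet_bddAbove _ _) (extSet_nonempty _ _)
        rintro t ht
        rcases mem_extSet.mp ht with rfl | ⟨r, hr, rfl⟩
        · exact Set.mem_insert _ _
        · refine mem_extSet.mpr (Or.inr ⟨g.symm r, ?_, by simp⟩)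
          have hlt : r < g p := lt_of_b_le_a hr
          have : g.symm r < p := by
            have := g.symm.strictMono hlt
            simpa using this
          exact b_le_a_of_lt this

lemma ext_strictMonoOn (g : Gap ≃o Gap) {x y : ℝ} (hx : x ∈ cantorSet) (hy : y ∈ cantorSet)
    (h : x < y) : ext ⇑g x < ext ⇑g y := by
  obtain ⟨q, h1, h2⟩ := exists_gap_between hx hy h
  calc ext ⇑g x ≤ ext ⇑g q.a := ext_mono _ h1
  _ = (g q).a := ext_apply_a g q
  _ < (g q).b := (g q).lt
  _ = ext ⇑g q.b := (ext_apply_b g q).symm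
  _ ≤ ext ⇑g y := ext_mono _ h2

lemma ext_le_reflect (g : Gap ≃o Gap) {x y : ℝ} (hx : x ∈ cantorSet) (hy : y ∈ cantorSet)
    (h : ext ⇑g x ≤ ext ⇑g y) : x ≤ y := by
  by_contra hc
  push_neg at hc
  exact absurd h (not_le.mpr (ext_strictMonoOn g hy hx hc))

lemma ext_symm_ext (g : Gap ≃o Gap) {x : ℝ} (hx : x ∈ cantorSet) :
    ext ⇑g.symm (ext ⇑g x) = x := by
  apply le_antisymm
  · apply csSup_le (extSet_nonempty _ _)
    rintro t ht
    rcases mem_extSet.mp ht with rfl | ⟨r, hr, rfl⟩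
    · exact (cantorSet_subset_unitInterval hx).1
    · by_contra hc
      push_neg at hc
      have hxa : x ≤ (g.symm r).a := by
        by_contra hc2
        push_neg at hc2
        exact (g.symm r).not_mem x hx ⟨hc2, hc⟩
      have h1 : ext ⇑g x ≤ (g (g.symm r)).a := by
        calc ext ⇑g x ≤ ext ⇑g (g.symm r).a := ext_mono _ hxa
        _ = (g (g.symm r)).a := ext_apply_a g _
      rw [g.apply_symm_apply] at h1
      linarith [r.lt]
  · calc x = ext id x := (ext_id hx).symm
    _ ≤ ext ⇑g.symm (ext ⇑g x) := by
        apply csSup_le_csSup (extSet_bddAbove _ _) (extSet_nonempty _ _)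
        rintro t ht
        rcases mem_extSet.mp ht with rfl | ⟨q, hq, rfl⟩
        · exact Set.mem_insert _ _
        · refine mem_extSet.mpr (Or.inr ⟨g q, ?_, by simp⟩)
          calc (g q).b = ext ⇑g q.b := (ext_apply_b g q).symm
          _ ≤ ext ⇑g x := ext_mono _ hq

end Gap
end CP

namespace CP
namespace Gap

instance : Nonempty Gap := ⟨middle⟩

noncomputable instance : Countable Gap := by
  have : Function.Injective (fun p : Gap => (exists_rat_btwn p.lt).choose) := by
    intro p q h
    have hp := (exists_rat_btwn p.lt).choose_spec
    have hq := (exists_rat_btwn q.lt).choose_spec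
    simp only at h
    rw [h] at hp
    exact eq_of_overlap (lt_trans hp.1 hq.2) (lt_trans hq.1 hp.2)
  exact this.countable

lemma a_pos (p : Gap) : 0 < p.a := by
  rcases lt_or_eq_of_le p.a_nonneg with h | h
  · exact h
  · exfalso
    obtain ⟨n, hn⟩ := exists_pow_lt_of_lt_one (sub_pos.mpr p.lt) (by norm_num : (1/3:ℝ) < 1)
    obtain ⟨y, hy, hne, hd⟩ := exists_near p.mem_a n
    rw [abs_le] at hd
    have hy0 := (cantorSet_subset_unitInterval hy).1
    rcases lt_trichotomy y p.a with h1 | h1 | h1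
    · linarith [h ▸ h1]
    · exact hne h1
    · exact p.not_mem y hy ⟨h1, by linarith⟩

lemma b_lt_one (p : Gap) : p.b < 1 := by
  rcases lt_or_eq_of_le p.b_le_one with h | h
  · exact h
  · exfalso
    obtain ⟨n, hn⟩ := exists_pow_lt_of_lt_one (sub_pos.mpr p.lt) (by norm_num : (1/3:ℝ) < 1)
    obtain ⟨y, hy, hne, hd⟩ := exists_near p.mem_b n
    rw [abs_le] at hd
    have hy1 := (cantorSet_subset_unitInterval hy).2
    rcases lt_trichotomy y p.b with h1 | h1 | h1
    · exact p.not_mem y hy ⟨by linarith, h1⟩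
    · exact hne h1
    · linarith [h ▸ h1]

noncomputable instance : NoMinOrder Gap := by
  constructor
  intro p
  have hpos : (0:ℝ) < min p.a (p.b - p.a) := lt_min p.a_pos (sub_pos.mpr p.lt)
  obtain ⟨n, hn⟩ := exists_pow_lt_of_lt_one hpos (by norm_num : (1/3:ℝ) < 1)
  obtain ⟨y, hy, hne, hd⟩ := exists_near p.mem_a n
  rw [abs_le] at hd
  have h1 : y < p.a := by
    rcases lt_trichotomy y p.a with h1 | h1 | h1
    · exact h1
    · exact absurd h1 hne
    · exact absurd ⟨h1, by linarith [lt_min_iff.mp hn]⟩ (p.not_mem y hy)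
  have h0 : 0 < y := by linarith [lt_min_iff.mp hn]
  obtain ⟨q, _, hq2⟩ := exists_gap_between zero_mem_cantorSet hy h0
  exact ⟨q, lt_of_b_le_a (by linarith)⟩

noncomputable instance : NoMaxOrder Gap := by
  constructor
  intro p
  have hpos : (0:ℝ) < min (1 - p.b) (p.b - p.a) := lt_min (by linarith [p.b_lt_one]) (sub_pos.mpr p.lt)
  obtain ⟨n, hn⟩ := exists_pow_lt_of_lt_one hpos (by norm_num : (1/3:ℝ) < 1)
  obtain ⟨y, hy, hne, hd⟩ := exists_near p.mem_b n
  rw [abs_le] at hd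
  have h1 : p.b < y := by
    rcases lt_trichotomy y p.b with h1 | h1 | h1
    · exact absurd ⟨by linarith [lt_min_iff.mp hn], h1⟩ (p.not_mem y hy)
    · exact absurd h1 hne
    · exact h1
  have h0 : y < 1 := by linarith [lt_min_iff.mp hn]
  obtain ⟨q, hq1, _⟩ := exists_gap_between hy one_mem_cantorSet h0
  exact ⟨q, lt_iff.mpr (by linarith [p.lt])⟩

noncomputable instance : DenselyOrdered Gap := by
  constructor
  intro p q hpq
  have hba := b_le_a_of_lt hpq
  rcases lt_or_eq_of_le hba with h | h
  · obtain ⟨r, hr1, hr2⟩ := exists_gap_between p.mem_b q.mem_a h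
    exact ⟨r, lt_iff.mpr (by linarith [p.lt]), lt_iff.mpr (by linarith [r.lt])⟩
  · exfalso
    have hpos : (0:ℝ) < min (p.b - p.a) (q.b - q.a) :=
      lt_min (sub_pos.mpr p.lt) (sub_pos.mpr q.lt)
    obtain ⟨n, hn⟩ := exists_pow_lt_of_lt_one hpos (by norm_num : (1/3:ℝ) < 1)
    obtain ⟨y, hy, hne, hd⟩ := exists_near p.mem_b n
    rw [abs_le] at hd
    obtain ⟨c1, c2⟩ := lt_min_iff.mp hn
    rcases lt_trichotomy y p.b with h1 | h1 | h1
    · exact p.not_mem y hy ⟨by linarith, h1⟩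
    · exact hne h1
    · exact q.not_mem y hy ⟨h ▸ h1, by linarith [h ▸ hd.2]⟩

end Gap
end CP

namespace CP

instance : CompactSpace ↥cantorSet := isCompact_iff_compactSpace.mp isCompact_cantorSet

open TopologicalSpace in
instance cantorOrderTopology : OrderTopology ↥cantorSet := by
  constructor
  apply le_antisymm
  · apply le_generateFrom
    rintro s ⟨a, (rfl | rfl)⟩
    · have : (Ioi a : Set ↥cantorSet) = Subtype.val ⁻¹' Ioi ↑a := by
        ext x; exact Iff.rfl
      rw [this]
      exact (isOpen_Ioi).preimage continuous_subtype_val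
    · have : (Iio a : Set ↥cantorSet) = Subtype.val ⁻¹' Iio ↑a := by
        ext x; exact Iff.rfl
      rw [this]
      exact (isOpen_Iio).preimage continuous_subtype_val
  · show generateFrom _ ≤ induced Subtype.val _
    rw [show (UniformSpace.toTopologicalSpace : TopologicalSpace ℝ) = _ from
      OrderTopology.topology_eq_generate_intervals (α := ℝ), Preorder.topology, induced_generateFrom_eq]
    apply le_generateFrom
    rintro s ⟨u, ⟨a, (rfl | rfl)⟩, rfl⟩
    · by_cases hne : (cantorSet ∩ Iic a).Nonempty
      · have hbdd : BddAbove (cantorSet ∩ Iic a) := ⟨a, fun x hx => hx.2⟩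
        have hbK : sSup (cantorSet ∩ Iic a) ∈ cantorSet ∩ Iic a :=
          (isClosed_cantorSet.inter isClosed_Iic).csSup_mem hne hbdd
        have heq : (Subtype.val ⁻¹' Ioi a : Set ↥cantorSet)
            = Ioi (⟨sSup (cantorSet ∩ Iic a), hbK.1⟩ : ↥cantorSet) := by
          ext x
          simp only [Set.mem_preimage, Set.mem_Ioi, ← Subtype.coe_lt_coe]
          constructor
          · intro h
            exact lt_of_le_of_lt hbK.2 h
          · intro h
            by_contra hc
            push_neg at hc
            exact absurd (le_csSup hbdd ⟨x.2, hc⟩) (not_le.mpr h)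
        rw [heq]
        exact TopologicalSpace.GenerateOpen.basic _ ⟨_, Or.inl rfl⟩
      · have heq : (Subtype.val ⁻¹' Ioi a : Set ↥cantorSet) = univ := by
          ext x
          simp only [Set.mem_preimage, Set.mem_Ioi, Set.mem_univ, iff_true]
          by_contra hc
          push_neg at hc
          exact hne ⟨↑x, x.2, hc⟩
        rw [heq]
        exact TopologicalSpace.GenerateOpen.univ
    · by_cases hne : (cantorSet ∩ Ici a).Nonempty
      · have hbdd : BddBelow (cantorSet ∩ Ici a) := ⟨a, fun x hx => hx.2⟩
        have hbK : sInf (cantorSet ∩ Ici a) ∈ cantorSet ∩ Ici a :=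
          (isClosed_cantorSet.inter isClosed_Ici).csInf_mem hne hbdd
        have heq : (Subtype.val ⁻¹' Iio a : Set ↥cantorSet)
            = Iio (⟨sInf (cantorSet ∩ Ici a), hbK.1⟩ : ↥cantorSet) := by
          ext x
          simp only [Set.mem_preimage, Set.mem_Iio, ← Subtype.coe_lt_coe]
          constructor
          · intro h
            exact lt_of_lt_of_le h hbK.2
          · intro h
            by_contra hc
            push_neg at hc
            exact absurd (csInf_le hbdd ⟨x.2, hc⟩) (not_le.mpr h)
        rw [heq]
        exact TopologicalSpace.GenerateOpen.basic _ ⟨_, Or.inr rfl⟩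
      · have heq : (Subtype.val ⁻¹' Iio a : Set ↥cantorSet) = univ := by
          ext x
          simp only [Set.mem_preimage, Set.mem_Iio, Set.mem_univ, iff_true]
          by_contra hc
          push_neg at hc
          exact hne ⟨↑x, x.2, hc⟩
        rw [heq]
        exact TopologicalSpace.GenerateOpen.univ

end CP

namespace CP
open Gap

lemma oph_strictMono (h : OPH) : StrictMono ⇑h.1 := h.2

noncomputable def gapMap (h : OPH) (p : Gap) : Gap :=
  ⟨(↑(h.1 ⟨p.a, p.mem_a⟩), ↑(h.1 ⟨p.b, p.mem_b⟩)), by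
    constructor
    · exact (h.1 ⟨p.a, p.mem_a⟩).2
    · exact (h.1 ⟨p.b, p.mem_b⟩).2
    · exact Subtype.coe_lt_coe.mpr (h.2 (Subtype.mk_lt_mk.mpr p.lt))
    · rintro t ht ⟨h1, h2⟩
      have hs : h.1 (h.1.symm ⟨t, ht⟩) = ⟨t, ht⟩ := h.1.apply_symm_apply _
      have h1' : (↑(h.1 ⟨p.a, p.mem_a⟩) : ℝ) < ↑(h.1 (h.1.symm ⟨t, ht⟩)) := by
        rw [hs]; exact h1
      have h2' : (↑(h.1 (h.1.symm ⟨t, ht⟩)) : ℝ) < ↑(h.1 ⟨p.b, p.mem_b⟩) := by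
        rw [hs]; exact h2
      have ha : p.a < ↑(h.1.symm ⟨t, ht⟩) :=
        Subtype.mk_lt_mk.mp (h.2.lt_iff_lt.mp (Subtype.coe_lt_coe.mp h1'))
      have hb : (↑(h.1.symm ⟨t, ht⟩) : ℝ) < p.b :=
        Subtype.mk_lt_mk.mp (h.2.lt_iff_lt.mp (Subtype.coe_lt_coe.mp h2'))
      exact p.not_mem _ (h.1.symm ⟨t, ht⟩).2 ⟨ha, hb⟩⟩

@[simp] lemma gapMap_a (h : OPH) (p : Gap) : (gapMap h p).a = ↑(h.1 ⟨p.a, p.mem_a⟩) := rfl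
@[simp] lemma gapMap_b (h : OPH) (p : Gap) : (gapMap h p).b = ↑(h.1 ⟨p.b, p.mem_b⟩) := rfl

lemma gapMap_comp (h h' : OPH) (p : Gap) : gapMap h (gapMap h' p) = gapMap (h * h') p := by
  apply ext_a
  simp only [gapMap_a]
  congr 1

lemma gapMap_one (p : Gap) : gapMap 1 p = p := ext_a rfl

noncomputable def gapIso (h : OPH) : Gap ≃o Gap where
  toFun := gapMap h
  invFun := gapMap h⁻¹
  left_inv := fun p => by rw [gapMap_comp, inv_mul_cancel, gapMap_one]
  right_inv := fun p => by rw [gapMap_comp, mul_inv_cancel, gapMap_one]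
  map_rel_iff' := by
    intro p q
    show (gapMap h p).a ≤ (gapMap h q).a ↔ p.a ≤ q.a
    simp only [gapMap_a, Subtype.coe_le_coe]
    rw [h.2.le_iff_le]
    exact Subtype.mk_le_mk

@[simp] lemma gapIso_apply (h : OPH) (p : Gap) : gapIso h p = gapMap h p := rfl

lemma gapIso_mul (h h' : OPH) : gapIso (h * h') = gapIso h * gapIso h' :=
  RelIso.ext fun p => (gapMap_comp h h' p).symm

noncomputable def kIso (g : Gap ≃o Gap) : ↥cantorSet ≃o ↥cantorSet where
  toFun := fun x => ⟨ext ⇑g ↑x, ext_mem _ _⟩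
  invFun := fun x => ⟨ext ⇑g.symm ↑x, ext_mem _ _⟩
  left_inv := fun x => Subtype.ext (ext_symm_ext g x.2)
  right_inv := fun x => Subtype.ext (by
    have := ext_symm_ext g.symm (x := ↑x) x.2
    simpa using this)
  map_rel_iff' := by
    intro x y
    show (⟨ext ⇑g ↑x, _⟩ : ↥cantorSet) ≤ ⟨ext ⇑g ↑y, _⟩ ↔ x ≤ y
    rw [Subtype.mk_le_mk]
    constructor
    · intro hle
      exact Subtype.coe_le_coe.mp (ext_le_reflect g x.2 y.2 hle)
    · intro hle
      exact ext_mono _ (Subtype.coe_le_coe.mpr hle)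

@[simp] lemma kIso_coe (g : Gap ≃o Gap) (x : ↥cantorSet) :
    (↑(kIso g x) : ℝ) = ext ⇑g ↑x := rfl

noncomputable def extOPH (g : Gap ≃o Gap) : OPH :=
  ⟨(kIso g).toHomeomorph, fun x y hxy => (kIso g).strictMono hxy⟩

@[simp] lemma extOPH_coe (g : Gap ≃o Gap) (x : ↥cantorSet) :
    (↑((extOPH g).1 x) : ℝ) = ext ⇑g ↑x := rfl

lemma gapIso_extOPH (g : Gap ≃o Gap) : gapIso (extOPH g) = g := by
  apply RelIso.ext
  intro p
  apply ext_a
  show (↑((extOPH g).1 ⟨p.a, p.mem_a⟩) : ℝ) = (g p).a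
  rw [extOPH_coe]
  exact ext_apply_a g p

lemma extOPH_gapIso (h : OPH) : extOPH (gapIso h) = h := by
  refine Subtype.ext (Homeomorph.ext fun x => Subtype.ext ?_)
  show ext ⇑(gapIso h) ↑x = ↑(h.1 x)
  apply le_antisymm
  · apply csSup_le (extSet_nonempty _ _)
    rintro t ht
    rcases mem_extSet.mp ht with rfl | ⟨q, hq, rfl⟩
    · exact (cantorSet_subset_unitInterval (h.1 x).2).1
    · show ((gapMap h q).b : ℝ) ≤ ↑(h.1 x)
      rw [gapMap_b]
      apply Subtype.coe_le_coe.mpr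
      apply h.2.monotone
      exact Subtype.mk_le_mk.mpr (by simpa using hq)
  · by_contra hc
    push_neg at hc
    obtain ⟨r, hr1, hr2⟩ := exists_gap_between (ext_mem _ _) (h.1 x).2 hc
    have hgq : gapMap h (gapMap h⁻¹ r) = r := by
      rw [gapMap_comp, mul_inv_cancel, gapMap_one]
    set q := gapMap h⁻¹ r with hq
    have hrb : r.b = ↑(h.1 ⟨q.b, q.mem_b⟩) := by rw [← hgq, gapMap_b]
    have hqx : q.b ≤ ↑x := by
      have : h.1 ⟨q.b, q.mem_b⟩ ≤ h.1 x := by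
        apply Subtype.coe_le_coe.mp
        rw [← hrb]
        exact hr2
      have := h.2.le_iff_le.mp this
      exact this
    have : r.b ∈ extSet ⇑(gapIso h) ↑x := by
      refine mem_extSet.mpr (Or.inr ⟨q, hqx, ?_⟩)
      show ((gapMap h q).b : ℝ) = r.b
      rw [hgq]
    have := le_csSup (extSet_bddAbove _ _) this
    have hlt := r.lt
    show False
    have : r.b ≤ r.a := le_trans this hr1
    linarith

noncomputable def eqc : ℚ ≃o Gap := (Order.iso_of_countable_dense (α := ℚ) (β := Gap)).some

noncomputable def toG (f : ℚ ≃o ℚ) : Gap ≃o Gap := (eqc.symm.trans f).trans eqc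
noncomputable def fromG (g : Gap ≃o Gap) : ℚ ≃o ℚ := (eqc.trans g).trans eqc.symm

@[simp] lemma toG_apply (f : ℚ ≃o ℚ) (p : Gap) : toG f p = eqc (f (eqc.symm p)) := rfl
@[simp] lemma fromG_apply (g : Gap ≃o Gap) (q : ℚ) : fromG g q = eqc.symm (g (eqc q)) := rfl

lemma toG_fromG (g : Gap ≃o Gap) : toG (fromG g) = g := RelIso.ext fun p => by simp
lemma fromG_toG (f : ℚ ≃o ℚ) : fromG (toG f) = f := RelIso.ext fun q => by simp

lemma toG_mul (f f' : ℚ ≃o ℚ) : toG (f * f') = toG f * toG f' :=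
  RelIso.ext fun p => by
    show eqc ((f * f') (eqc.symm p)) = toG f (toG f' p)
    simp [RelIso.mul_apply]

lemma extOPH_mul (g g' : Gap ≃o Gap) : extOPH (g * g') = extOPH g * extOPH g' := by
  have hinj : Function.Injective gapIso := Function.LeftInverse.injective extOPH_gapIso
  apply hinj
  rw [gapIso_extOPH, gapIso_mul, gapIso_extOPH, gapIso_extOPH]

noncomputable def E : (ℚ ≃o ℚ) ≃* OPH where
  toFun := fun f => extOPH (toG f)
  invFun := fun h => fromG (gapIso h)
  left_inv := fun f => by
    show fromG (gapIso (extOPH (toG f))) = f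
    rw [gapIso_extOPH, fromG_toG]
  right_inv := fun h => by
    show extOPH (toG (fromG (gapIso h))) = h
    rw [toG_fromG, extOPH_gapIso]
  map_mul' := fun f f' => by
    show extOPH (toG (f * f')) = extOPH (toG f) * extOPH (toG f')
    rw [toG_mul, extOPH_mul]

end CP

namespace CP
open Gap

noncomputable def Fcm : OPH → C(↥cantorSet, ↥cantorSet) :=
  fun h : OPH => (⟨⇑h.1, h.1.continuous⟩ : C(↥cantorSet, ↥cantorSet))

lemma OPHTop_eq : OPHTop = TopologicalSpace.induced Fcm ContinuousMap.compactOpen := rfl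

@[simp] lemma Fcm_apply (h : OPH) (x : ↥cantorSet) : Fcm h x = h.1 x := rfl

lemma isOpen_gap_cond (p p' : Gap) :
    @IsOpen _ OPHTop {h : OPH | gapMap h p = p'} := by
  letI : TopologicalSpace OPH := OPHTop
  set δ := p'.b - p'.a with hδ
  have hδ0 : 0 < δ := sub_pos.mpr p'.lt
  set U : Set C(↥cantorSet, ↥cantorSet) :=
    {φ | (↑(φ ⟨p.a, p.mem_a⟩) : ℝ) ∈ Ioo (p'.a - δ) (p'.a + δ) ∧
         (↑(φ ⟨p.b, p.mem_b⟩) : ℝ) ∈ Ioo (p'.b - δ) (p'.b + δ)} with hU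
  have hUopen : IsOpen U := by
    apply IsOpen.inter
    · exact (((isOpen_Ioo).preimage continuous_subtype_val).preimage
        (continuous_eval_const _))
    · exact (((isOpen_Ioo).preimage continuous_subtype_val).preimage
        (continuous_eval_const _))
  have hset : {h : OPH | gapMap h p = p'} = Fcm ⁻¹' U := by
    ext h
    simp only [Set.mem_setOf_eq, Set.mem_preimage, hU, Set.mem_Ioo, Fcm_apply]
    constructor
    · intro he
      have ha : (↑(h.1 ⟨p.a, p.mem_a⟩) : ℝ) = p'.a := by rw [← he]; rfl
      have hb : (↑(h.1 ⟨p.b, p.mem_b⟩) : ℝ) = p'.b := by rw [← he]; rfl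
      rw [ha, hb]
      refine ⟨⟨by linarith, by linarith⟩, by linarith, by linarith⟩
    · rintro ⟨⟨ha1, ha2⟩, hb1, hb2⟩
      apply eq_of_overlap
      · show (gapMap h p).a < p'.b
        rw [gapMap_a]
        have he : p'.a + δ = p'.b := by rw [hδ]; ring
        rw [← he]
        exact ha2
      · show p'.a < (gapMap h p).b
        rw [gapMap_b]
        have he : p'.b - δ = p'.a := by rw [hδ]; ring
        rw [← he]
        exact hb1
  show IsOpen _
  rw [hset, OPHTop_eq]
  exact hUopen.preimage continuous_induced_dom

lemma contB : @Continuous _ _ OPHTop autQTop (fun h : OPH => fromG (gapIso h)) := by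
  letI : TopologicalSpace OPH := OPHTop
  rw [show autQTop = TopologicalSpace.induced (fun f : ℚ ≃o ℚ => (⇑f : ℚ → ℚ))
    (@Pi.topologicalSpace ℚ (fun _ => ℚ) (fun _ => ⊥)) from rfl]
  rw [continuous_induced_rng]
  apply @continuous_pi _ _ _ _ (fun _ => (⊥ : TopologicalSpace ℚ)) _
  intro q
  rw [continuous_def]
  intro s _
  show IsOpen ((fun h : OPH => fromG (gapIso h) q) ⁻¹' s)
  have heq : (fun h : OPH => fromG (gapIso h) q) ⁻¹' s
      = ⋃ q' ∈ s, {h : OPH | gapMap h (eqc q) = eqc q'} := by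
    ext h
    simp only [Set.mem_preimage, Set.mem_iUnion, Set.mem_setOf_eq]
    constructor
    · intro hm
      refine ⟨fromG (gapIso h) q, hm, ?_⟩
      show gapIso h (eqc q) = eqc (eqc.symm (gapIso h (eqc q)))
      rw [OrderIso.apply_symm_apply]
    · rintro ⟨q', hq', he⟩
      have : fromG (gapIso h) q = q' := by
        show eqc.symm (gapIso h (eqc q)) = q'
        rw [show gapIso h (eqc q) = gapMap h (eqc q) from rfl, he, OrderIso.symm_apply_apply]
      rw [this]
      exact hq'
  rw [heq]
  exact isOpen_biUnion fun q' _ => isOpen_gap_cond (eqc q) (eqc q')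

end CP

namespace CP
open Gap

lemma bigGaps_finite {δ : ℝ} (hδ : 0 < δ) : {r : Gap | δ ≤ r.b - r.a}.Finite := by
  apply Set.Finite.of_finite_image (f := fun r : Gap => ⌊r.a / δ⌋)
  · apply Set.Finite.subset (Set.finite_Icc (0:ℤ) ⌈1/δ⌉)
    rintro _ ⟨r, hr, rfl⟩
    constructor
    · exact Int.floor_nonneg.mpr (div_nonneg r.a_nonneg hδ.le)
    · calc ⌊r.a / δ⌋ ≤ ⌈r.a / δ⌉ := Int.floor_le_ceil _
      _ ≤ ⌈1 / δ⌉ := Int.ceil_le_ceil ((div_le_div_iff_of_pos_right hδ).mpr r.a_le_one)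
  · intro r hr r' hr' he
    simp only at he
    have key : ∀ s s' : Gap, s ∈ {r : Gap | δ ≤ r.b - r.a} → s' ∈ {r : Gap | δ ≤ r.b - r.a} →
        ⌊s.a / δ⌋ = ⌊s'.a / δ⌋ → ¬ s < s' := by
      intro s s' hs hs' hee hlt
      have h1 : s.b ≤ s'.a := b_le_a_of_lt hlt
      have hs0 : δ ≤ s.b - s.a := hs
      have h2 : s.a / δ + 1 ≤ s'.a / δ := by
        have hr : s.a / δ + 1 = (s.a + δ) / δ := by field_simp
        rw [hr]
        exact (div_le_div_iff_of_pos_right hδ).mpr (by linarith)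
      have h3 : ⌊s.a / δ⌋ + 1 ≤ ⌊s'.a / δ⌋ := by
        apply Int.le_floor.mpr
        push_cast
        linarith [Int.floor_le (s.a / δ)]
      omega
    rcases lt_trichotomy r r' with h | h | h
    · exact absurd h (key r r' hr hr' he)
    · exact h
    · exact absurd h (key r' r hr' hr he.symm)

lemma ext_close (g g₀ : Gap ≃o Gap) (n : ℕ)
    (hag : ∀ r : Gap, (1/3:ℝ)^(n+1) ≤ r.b - r.a → g (g₀.symm r) = r)
    {x : ℝ} (hx : x ∈ cantorSet) : |ext ⇑g x - ext ⇑g₀ x| ≤ (1/3:ℝ)^n := by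
  by_contra hc
  push_neg at hc
  rcases abs_cases (ext ⇑g x - ext ⇑g₀ x) with ⟨he, _⟩ | ⟨he, _⟩ <;> rw [he] at hc
  · -- ext g₀ x < ext g x
    obtain ⟨r, hr1, hr2, hr3⟩ := exists_bigGap n (ext ⇑g₀ x) (ext ⇑g x)
      (ext_mem _ _) (ext_mem _ _) (by linarith)
    have hgq : g (g₀.symm r) = r := hag r hr3
    set q := g₀.symm r with hq
    have hqx : q.b ≤ x := by
      apply ext_le_reflect g q.mem_b hx
      rw [ext_apply_b, hgq]
      exact hr2
    have : r.b ∈ extSet ⇑g₀ x := by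
      refine mem_extSet.mpr (Or.inr ⟨q, hqx, ?_⟩)
      rw [hq, OrderIso.apply_symm_apply]
    have := le_csSup (extSet_bddAbove _ _) this
    have := r.lt
    show False
    have : r.b ≤ r.a := le_trans ‹r.b ≤ ext ⇑g₀ x› hr1
    linarith
  · -- ext g x < ext g₀ x
    obtain ⟨r, hr1, hr2, hr3⟩ := exists_bigGap n (ext ⇑g x) (ext ⇑g₀ x)
      (ext_mem _ _) (ext_mem _ _) (by linarith)
    have hgq : g (g₀.symm r) = r := hag r hr3
    set q := g₀.symm r with hq
    have hqx : q.b ≤ x := by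
      apply ext_le_reflect g₀ q.mem_b hx
      rw [ext_apply_b, hq, OrderIso.apply_symm_apply]
      exact hr2
    have : r.b ∈ extSet ⇑g x := by
      refine mem_extSet.mpr (Or.inr ⟨q, hqx, ?_⟩)
      rw [hgq]
    have := le_csSup (extSet_bddAbove _ _) this
    have := r.lt
    show False
    have : r.b ≤ r.a := le_trans ‹r.b ≤ ext ⇑g x› hr1
    linarith

lemma cylinder_mem_nhds (f₀ : ℚ ≃o ℚ) {F : Set ℚ} (hF : F.Finite) :
    {f : ℚ ≃o ℚ | ∀ q ∈ F, f q = f₀ q} ∈ @nhds _ autQTop f₀ := by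
  have h1 : @nhds _ autQTop f₀ = Filter.comap (fun f : ℚ ≃o ℚ => (⇑f : ℚ → ℚ))
      (@nhds _ (@Pi.topologicalSpace ℚ (fun _ => ℚ) (fun _ => ⊥)) ⇑f₀) :=
    @nhds_induced _ _ (@Pi.topologicalSpace ℚ (fun _ => ℚ) (fun _ => ⊥)) _ f₀
  rw [h1]
  letI tp : TopologicalSpace (ℚ → ℚ) := @Pi.topologicalSpace ℚ (fun _ => ℚ) (fun _ => ⊥)
  apply Filter.mem_comap.mpr
  refine ⟨F.pi (fun q => {f₀ q}), ?_, ?_⟩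
  · have hsing : ∀ q : ℚ, ({f₀ q} : Set ℚ) ∈ @nhds ℚ ⊥ (f₀ q) := by
      intro q
      rw [@nhds_discrete ℚ ⊥ (@DiscreteTopology.mk ℚ ⊥ rfl)]
      exact Filter.mem_pure.mpr rfl
    exact @set_pi_mem_nhds ℚ (fun _ => ℚ) (fun _ => ⊥) F (fun q => {f₀ q}) ⇑f₀ hF
      (fun q _ => hsing q)
  · intro f hf q hq
    exact hf q hq

lemma contA : @Continuous _ _ autQTop OPHTop (fun f : ℚ ≃o ℚ => extOPH (toG f)) := by
  letI : TopologicalSpace (ℚ ≃o ℚ) := autQTop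
  rw [show OPHTop = TopologicalSpace.induced Fcm ContinuousMap.compactOpen from rfl]
  rw [continuous_induced_rng]
  rw [continuous_iff_continuousAt]
  intro f₀
  rw [ContinuousAt, Metric.tendsto_nhds]
  intro ε hε
  obtain ⟨n, hn⟩ := exists_pow_lt_of_lt_one hε (by norm_num : (1/3:ℝ) < 1)
  have hδ : (0:ℝ) < (1/3:ℝ)^(n+1) := by positivity
  set T : Set Gap := {r : Gap | (1/3:ℝ)^(n+1) ≤ r.b - r.a} with hT
  set F : Set ℚ := ⇑eqc.symm '' ((fun r => (toG f₀).symm r) '' T) with hF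
  have hFfin : F.Finite := ((bigGaps_finite hδ).image _).image _
  apply Filter.mem_of_superset (cylinder_mem_nhds f₀ hFfin)
  intro f hf
  simp only [Set.mem_setOf_eq] at hf ⊢
  have hag : ∀ r : Gap, (1/3:ℝ)^(n+1) ≤ r.b - r.a → toG f ((toG f₀).symm r) = r := by
    intro r hr
    have hqF : eqc.symm ((toG f₀).symm r) ∈ F := ⟨(toG f₀).symm r, ⟨r, hr, rfl⟩, rfl⟩
    have hfq := hf _ hqF
    have : toG f ((toG f₀).symm r) = toG f₀ ((toG f₀).symm r) := by
      show eqc (f (eqc.symm ((toG f₀).symm r))) = eqc (f₀ (eqc.symm ((toG f₀).symm r)))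
      rw [hfq]
    rw [this, OrderIso.apply_symm_apply]
  have hclose := fun (x : ↥cantorSet) => ext_close (toG f) (toG f₀) n hag x.2
  rw [show ((fun h : OPH => Fcm h) ∘ fun f : ℚ ≃o ℚ => extOPH (toG f)) =
    fun f : ℚ ≃o ℚ => Fcm (extOPH (toG f)) from rfl]
  have hdist : dist (Fcm (extOPH (toG f))) (Fcm (extOPH (toG f₀))) ≤ (1/3:ℝ)^n := by
    rw [ContinuousMap.dist_le (by positivity)]
    intro x
    rw [Subtype.dist_eq, Real.dist_eq]
    exact hclose x
  exact lt_of_le_of_lt hdist hn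

end CP

/-- the topological group `Aut(ℚ, ≤)` with the topology of pointwise
convergence is isomorphic, as a topological group, to the group of order-preserving
self-homeomorphisms of the Cantor middle-third set with the compact-open topology. -/
theorem autQ_iso_cantor_homeos :
    ∃ e : (ℚ ≃o ℚ) ≃* OPH,
      @Continuous _ _ autQTop OPHTop e ∧ @Continuous _ _ OPHTop autQTop e.symm := by
  exact ⟨CP.E, CP.contA, CP.contB⟩
end
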